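/- Let α be a finite type and β : α → Type a family of finite nonempty types. The simplex-operad composition map γ, sending a pair (s, t) with s ∈ Δ°(α) and t a ∈ Δ°(β a) for each a to the function on the sigma type Σ a, β a given by γ(s,t)(a,b) = s a · t a b, takes values in the open simplex Δ°(Σ a, β a), and the resulting map γ : Δ°(α) × (Π a, Δ°(β a)) → Δ°(Σ a, β a) is a homeomorphism (with respect to the product and subspace topologies). -/
import Mathlib


open scoped Topology

/-- The open simplex on a finite type `α`: the subspace
`{x : α → ℝ | (∀ a, 0 < x a) ∧ ∑ a, x a = 1}` of the product space `α → ℝ`. -/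
def openSimplex (α : Type) [Fintype α] : Set (α → ℝ) :=
  {x | (∀ a, 0 < x a) ∧ ∑ a, x a = 1}

/-- The simplex-operad composition map on underlying functions:
`γ(s,t)(a,b) = s a · t a b`. -/
def gammaFn {α : Type} (β : α → Type) (s : α → ℝ) (t : ∀ a, β a → ℝ) :
    (Σ a, β a) → ℝ :=
  fun p => s p.1 * t p.1 p.2

section Aux
variable {α : Type} [Fintype α] (β : α → Type) [∀ a, Fintype (β a)] [∀ a, Nonempty (β a)]

lemma gamma_mem (s : openSimplex α) (t : ∀ a, openSimplex (β a)) :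
    gammaFn β s.val (fun a => (t a).val) ∈ openSimplex (Σ a, β a) := by
  refine ⟨fun p => mul_pos (s.2.1 p.1) ((t p.1).2.1 p.2), ?_⟩
  rw [← Finset.univ_sigma_univ, Finset.sum_sigma]
  simp only [gammaFn, ← Finset.mul_sum]
  have : ∀ a, ∑ b, (t a).val b = 1 := fun a => (t a).2.2
  simp only [this, mul_one]
  exact s.2.2

lemma sumPart_pos (x : openSimplex (Σ a, β a)) (a : α) :
    0 < ∑ b, x.val ⟨a, b⟩ :=
  Finset.sum_pos (fun b _ => x.2.1 ⟨a, b⟩) Finset.univ_nonempty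

noncomputable def gammaInv (x : openSimplex (Σ a, β a)) :
    openSimplex α × ∀ a, openSimplex (β a) :=
  ⟨⟨fun a => ∑ b, x.val ⟨a, b⟩,
    ⟨fun a => sumPart_pos β x a, by rw [← Finset.sum_sigma (Finset.univ) (fun _ => Finset.univ) (fun p => x.val p), Finset.univ_sigma_univ]; exact x.2.2⟩⟩,
   fun a => ⟨fun b => x.val ⟨a, b⟩ / ∑ b, x.val ⟨a, b⟩,
    ⟨fun b => div_pos (x.2.1 ⟨a, b⟩) (sumPart_pos β x a),
     by rw [← Finset.sum_div, div_self (sumPart_pos β x a).ne']⟩⟩⟩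

noncomputable def gammaEquiv :
    (openSimplex α × ∀ a, openSimplex (β a)) ≃ openSimplex (Σ a, β a) where
  toFun p := ⟨gammaFn β p.1.val (fun a => (p.2 a).val), gamma_mem β p.1 p.2⟩
  invFun := gammaInv β
  left_inv := by
    rintro ⟨s, t⟩
    have hs : ∀ a, ∑ b, s.val a * (t a).val b = s.val a := by
      intro a
      rw [← Finset.mul_sum, (t a).2.2, mul_one]
    refine Prod.ext (Subtype.ext ?_) ?_
    · funext a
      exact hs a
    · funext a
      refine Subtype.ext (funext fun b => ?_)
      show s.val a * (t a).val b / (∑ b, s.val a * (t a).val b) = (t a).val b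
      rw [hs a, mul_comm, mul_div_assoc, div_self (s.2.1 a).ne', mul_one]
  right_inv := by
    intro x
    refine Subtype.ext (funext fun p => ?_)
    show (∑ b, x.val ⟨p.1, b⟩) * (x.val ⟨p.1, p.2⟩ / ∑ b, x.val ⟨p.1, b⟩) = x.val p
    rw [mul_div_cancel₀ _ (sumPart_pos β x p.1).ne']

lemma continuous_gammaFwd :
    Continuous fun p : openSimplex α × ∀ a, openSimplex (β a) =>
      (gammaEquiv β p : openSimplex (Σ a, β a)) := by
  refine Continuous.subtype_mk (continuous_pi fun q => ?_) _
  exact ((continuous_apply q.1).comp (continuous_subtype_val.comp continuous_fst)).mul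
    ((continuous_apply q.2).comp
      (continuous_subtype_val.comp ((continuous_apply q.1).comp continuous_snd)))

lemma continuous_sumPart (a : α) :
    Continuous fun x : openSimplex (Σ a, β a) => ∑ b, x.val ⟨a, b⟩ :=
  continuous_finset_sum _ fun b _ =>
    (continuous_apply (⟨a, b⟩ : Σ a, β a)).comp continuous_subtype_val

lemma continuous_gammaInv : Continuous (gammaInv β) := by
  refine Continuous.prodMk ?_ ?_
  · exact Continuous.subtype_mk (continuous_pi fun a => continuous_sumPart β a) _
  · refine continuous_pi fun a => Continuous.subtype_mk (continuous_pi fun b => ?_) _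
    exact Continuous.div
      ((continuous_apply (⟨a, b⟩ : Σ a, β a)).comp continuous_subtype_val)
      (continuous_sumPart β a) (fun x => (sumPart_pos β x a).ne')

end Aux

/-- The simplex-operad composition map `γ` takes values in the open simplex
`Δ°(Σ a, β a)`, and the resulting map
`Δ°(α) × (Π a, Δ°(β a)) → Δ°(Σ a, β a)` is a homeomorphism. -/
theorem gamma_mem_and_homeomorph {α : Type} [Fintype α] (β : α → Type)
    [∀ a, Fintype (β a)] [∀ a, Nonempty (β a)] :
    (∀ (s : openSimplex α) (t : ∀ a, openSimplex (β a)),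
        gammaFn β s.val (fun a => (t a).val) ∈ openSimplex (Σ a, β a)) ∧
    (∃ H : (openSimplex α × ∀ a, openSimplex (β a)) ≃ₜ openSimplex (Σ a, β a),
        ∀ (s : openSimplex α) (t : ∀ a, openSimplex (β a)),
          (H (s, t)).val = gammaFn β s.val (fun a => (t a).val)) := by
  refine ⟨gamma_mem β, ⟨⟨gammaEquiv β, continuous_gammaFwd β, continuous_gammaInv β⟩,
    fun s t => rfl⟩⟩
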